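/- Existence of the exact modified Hamiltonian for the implicit midpoint rule for the harmonic oscillator (instance of Proposition 1(b)): let h ≠ 0 with cos(h/2) ≠ 0, and define Ĥ_MP(p,q) = (tan(h/2)/h)·(p² + q²). Then for every y₀ = (p₀,q₀) ∈ ℝ², setting y₁ = (p₀·cos h − q₀·sin h, p₀·sin h + q₀·cos h) (the exact time-h harmonic-oscillator flow), one has J⁻¹∇Ĥ_MP((y₀ + y₁)/2) = (y₁ − y₀)/h. -/

import Mathlib

/-
Write `t = tan (h / 2)`. The half-angle identities `t (1 + cos h) = sin h` and
`t sin h = 1 - cos h` (valid when `cos (h / 2) ≠ 0`) say that if `y₁` is `y₀` rotated by `h`,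
then `t (y₀ + y₁)` is `y₁ - y₀` turned by a right angle. As the gradient of `Ĥ_MP` is `2t/h`
times its argument, its symplectic gradient at the midpoint is `(y₁ - y₀) / h`.
-/

noncomputable section

/-- The modified Hamiltonian of the implicit midpoint rule with step `h` for the
harmonic oscillator. -/
def HMP (h p q : ℝ) : ℝ := (Real.tan (h / 2) / h) * (p ^ 2 + q ^ 2)

namespace Real

theorem sin_eq_two_mul_sin_half_mul_cos_half (x : ℝ) :
    sin x = 2 * sin (x / 2) * cos (x / 2) := by
  rw [← sin_two_mul, mul_div_cancel₀ x two_ne_zero]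

theorem cos_eq_two_mul_cos_half_sq_sub_one (x : ℝ) : cos x = 2 * cos (x / 2) ^ 2 - 1 := by
  rw [← cos_two_mul, mul_div_cancel₀ x two_ne_zero]

theorem tan_half_mul_one_add_cos {x : ℝ} (hx : cos (x / 2) ≠ 0) :
    tan (x / 2) * (1 + cos x) = sin x := by
  rw [tan_eq_sin_div_cos, sin_eq_two_mul_sin_half_mul_cos_half x,
    cos_eq_two_mul_cos_half_sq_sub_one x]
  field_simp
  ring

theorem tan_half_mul_sin {x : ℝ} (hx : cos (x / 2) ≠ 0) :
    tan (x / 2) * sin x = 1 - cos x := by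
  rw [tan_eq_sin_div_cos, sin_eq_two_mul_sin_half_mul_cos_half x,
    cos_eq_two_mul_cos_half_sq_sub_one x]
  field_simp
  linear_combination 2 * sin_sq_add_cos_sq (x / 2)

end Real

open Real

theorem tan_half_mul_add_rotation_snd {x : ℝ} (hx : cos (x / 2) ≠ 0) (p q : ℝ) :
    tan (x / 2) * (q + (p * sin x + q * cos x)) = p - (p * cos x - q * sin x) := by
  linear_combination p * tan_half_mul_sin hx + q * tan_half_mul_one_add_cos hx

theorem tan_half_mul_add_rotation_fst {x : ℝ} (hx : cos (x / 2) ≠ 0) (p q : ℝ) :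
    tan (x / 2) * (p + (p * cos x - q * sin x)) = (p * sin x + q * cos x) - q := by
  linear_combination p * tan_half_mul_one_add_cos hx - q * tan_half_mul_sin hx

theorem deriv_HMP_fst (h p q : ℝ) :
    deriv (fun p => HMP h p q) p = tan (h / 2) / h * (2 * p) := by
  unfold HMP
  simp

theorem deriv_HMP_snd (h p q : ℝ) :
    deriv (fun q => HMP h p q) q = tan (h / 2) / h * (2 * q) := by
  unfold HMP
  simp

theorem stmt9_general (h : ℝ) (hcos : Real.cos (h / 2) ≠ 0) :
    ∀ p₀ q₀ p₁ q₁ : ℝ,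
      p₁ = p₀ * Real.cos h - q₀ * Real.sin h →
      q₁ = p₀ * Real.sin h + q₀ * Real.cos h →
      -(deriv (fun q => HMP h ((p₀ + p₁) / 2) q) ((q₀ + q₁) / 2)) = (p₁ - p₀) / h ∧
        deriv (fun p => HMP h p ((q₀ + q₁) / 2)) ((p₀ + p₁) / 2) = (q₁ - q₀) / h := by
  rintro p₀ q₀ p₁ q₁ rfl rfl
  rw [deriv_HMP_fst, deriv_HMP_snd]
  constructor
  · rw [div_mul_eq_mul_div, mul_div_cancel₀ _ two_ne_zero, tan_half_mul_add_rotation_snd hcos]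
    ring
  · rw [div_mul_eq_mul_div, mul_div_cancel₀ _ two_ne_zero, tan_half_mul_add_rotation_fst hcos]

/-- existence of the exact modified Hamiltonian for the implicit midpoint
rule for the harmonic oscillator: along the exact time-`h` flow
`(p₁, q₁) = (p₀ cos h − q₀ sin h, p₀ sin h + q₀ cos h)`, the symplectic gradient
`J⁻¹∇Ĥ_MP = (−∂Ĥ_MP/∂q, ∂Ĥ_MP/∂p)` at the midpoint `(y₀ + y₁)/2` equals `(y₁ − y₀)/h`. -/
theorem stmt9 (h : ℝ) (hh : h ≠ 0) (hcos : Real.cos (h / 2) ≠ 0) :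
    ∀ p₀ q₀ p₁ q₁ : ℝ,
      p₁ = p₀ * Real.cos h - q₀ * Real.sin h →
      q₁ = p₀ * Real.sin h + q₀ * Real.cos h →
      -(deriv (fun q => HMP h ((p₀ + p₁) / 2) q) ((q₀ + q₁) / 2)) = (p₁ - p₀) / h ∧
        deriv (fun p => HMP h p ((q₀ + q₁) / 2)) ((p₀ + p₁) / 2) = (q₁ - q₀) / h :=
  stmt9_general h hcos
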